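/- arXiv:2201.08343 — 2 statements merged into one kernel-verified Lean document; each statement's English description precedes it below -/
import Mathlib

section
/- Let X, Z, Y be random variables where (X,Z) is independent of the family of potential outcomes {Y(x,z)}, and the observed outcome satisfies Y = Y(X,Z). If Y is conditionally independent of X given Z, then for all x, x' in the support of X and z in the support of Z (with positive joint probability), the potential outcomes Y(x,z) and Y(x',z) have the same distribution. -/
open Finset

open Classical in
/-- Probability of an event `S` under the weight function `p` on a finite sample space. -/
noncomputable def Pr {Ω : Type*} [Fintype Ω] (p : Ω → ℝ) (S : Ω → Prop) : ℝ :=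
  ∑ ω, if S ω then p ω else 0

open Classical

lemma Pr_congr {Ω : Type*} [Fintype Ω] (p : Ω → ℝ) {S T : Ω → Prop}
    (h : ∀ ω, S ω ↔ T ω) : Pr p S = Pr p T := by
  unfold Pr
  exact Finset.sum_congr rfl fun ω _ => by simp [h ω]

lemma Pr_mono {Ω : Type*} [Fintype Ω] (p : Ω → ℝ) (hp : ∀ ω, 0 ≤ p ω) {S T : Ω → Prop}
    (h : ∀ ω, S ω → T ω) : Pr p S ≤ Pr p T := by
  unfold Pr
  apply Finset.sum_le_sum
  intro ω _
  by_cases hs : S ω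
  · simp [hs, h ω hs]
  · simp only [hs, if_false]
    split <;> simp [hp ω]

lemma Pr_partition {Ω 𝒳 𝒵 : Type*} [Fintype Ω] [Fintype 𝒳] [Fintype 𝒵]
    (p : Ω → ℝ) (Y0 : 𝒳 → 𝒵 → Ω → ℝ) (A : Ω → Prop) (x : 𝒳) (z : 𝒵) (t : ℝ) :
    Pr p (fun ω => A ω ∧ Y0 x z ω = t)
      = ∑ g ∈ (Finset.univ.image (fun ω a b => Y0 a b ω)).filter (fun g => g x z = t),
          Pr p (fun ω => A ω ∧ ∀ a b, Y0 a b ω = g a b) := by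
  unfold Pr
  rw [Finset.sum_comm]
  apply Finset.sum_congr rfl
  intro ω _
  by_cases hA : A ω
  · have hiff : ∀ g : 𝒳 → 𝒵 → ℝ, (A ω ∧ ∀ a b, Y0 a b ω = g a b) ↔ g = fun a b => Y0 a b ω := by
      intro g
      constructor
      · rintro ⟨-, h⟩; funext a b; exact (h a b).symm
      · rintro rfl; exact ⟨hA, fun a b => rfl⟩
    simp only [hiff]
    rw [Finset.sum_ite_eq' ]
    have hmem : (fun a b => Y0 a b ω) ∈ Finset.univ.image (fun ω a b => Y0 a b ω) :=
      Finset.mem_image_of_mem _ (Finset.mem_univ ω)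
    simp [Finset.mem_filter, hmem, hA]
  · simp [hA]

theorem stmt0 {Ω 𝒳 𝒵 : Type*} [Fintype Ω] [Fintype 𝒳] [Fintype 𝒵]
    (p : Ω → ℝ) (hp : ∀ ω, 0 ≤ p ω) (hp1 : ∑ ω, p ω = 1)
    (X : Ω → 𝒳) (Z : Ω → 𝒵) (Y0 : 𝒳 → 𝒵 → Ω → ℝ)
    (Y : Ω → ℝ) (hY : ∀ ω, Y ω = Y0 (X ω) (Z ω) ω)
    -- randomization: (X,Z) is independent of the family of potential outcomes
    (hrand : ∀ (x : 𝒳) (z : 𝒵) (g : 𝒳 → 𝒵 → ℝ),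
      Pr p (fun ω => X ω = x ∧ Z ω = z ∧ ∀ a b, Y0 a b ω = g a b)
        = Pr p (fun ω => X ω = x ∧ Z ω = z) * Pr p (fun ω => ∀ a b, Y0 a b ω = g a b))
    -- conditional independence Y ⊥ X | Z
    (hCI : ∀ (t : ℝ) (x : 𝒳) (z : 𝒵), 0 < Pr p (fun ω => Z ω = z) →
      Pr p (fun ω => Y ω = t ∧ X ω = x ∧ Z ω = z) / Pr p (fun ω => Z ω = z)
        = (Pr p (fun ω => Y ω = t ∧ Z ω = z) / Pr p (fun ω => Z ω = z))
          * (Pr p (fun ω => X ω = x ∧ Z ω = z) / Pr p (fun ω => Z ω = z))) :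
    ∀ (x x' : 𝒳) (z : 𝒵),
      0 < Pr p (fun ω => X ω = x ∧ Z ω = z) →
      0 < Pr p (fun ω => X ω = x' ∧ Z ω = z) →
      ∀ t : ℝ, Pr p (fun ω => Y0 x z ω = t) = Pr p (fun ω => Y0 x' z ω = t) := by
  -- key factorization lemma
  have key : ∀ (x : 𝒳) (z : 𝒵) (t : ℝ),
      Pr p (fun ω => Y ω = t ∧ X ω = x ∧ Z ω = z)
        = Pr p (fun ω => X ω = x ∧ Z ω = z) * Pr p (fun ω => Y0 x z ω = t) := by
    intro x z t
    have e1 : Pr p (fun ω => Y ω = t ∧ X ω = x ∧ Z ω = z)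
        = Pr p (fun ω => (X ω = x ∧ Z ω = z) ∧ Y0 x z ω = t) := by
      apply Pr_congr
      intro ω
      constructor
      · rintro ⟨hy, hxx, hzz⟩
        exact ⟨⟨hxx, hzz⟩, by rw [← hxx, ← hzz, ← hY]; exact hy⟩
      · rintro ⟨⟨hxx, hzz⟩, hy⟩
        exact ⟨by rw [hY, hxx, hzz]; exact hy, hxx, hzz⟩
    have e2 : Pr p (fun ω => Y0 x z ω = t)
        = ∑ g ∈ (Finset.univ.image (fun ω a b => Y0 a b ω)).filter (fun g => g x z = t),
            Pr p (fun ω => ∀ a b, Y0 a b ω = g a b) := by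
      have := Pr_partition p Y0 (fun _ => True) x z t
      rw [Pr_congr p (T := fun ω => (fun _ : Ω => True) ω ∧ Y0 x z ω = t) (fun ω => by simp),
        this]
      exact Finset.sum_congr rfl fun g _ => Pr_congr p (fun ω => by simp)
    rw [e1, Pr_partition p Y0 (fun ω => X ω = x ∧ Z ω = z) x z t, e2, Finset.mul_sum]
    apply Finset.sum_congr rfl
    intro g _
    rw [← hrand x z g]
    exact Pr_congr p (fun ω => by tauto)
  intro x x' z hx hx' t
  have hz : 0 < Pr p (fun ω => Z ω = z) :=
    lt_of_lt_of_le hx (Pr_mono p hp fun ω h => h.2)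
  have formula : ∀ x : 𝒳, 0 < Pr p (fun ω => X ω = x ∧ Z ω = z) →
      Pr p (fun ω => Y0 x z ω = t)
        = Pr p (fun ω => Y ω = t ∧ Z ω = z) / Pr p (fun ω => Z ω = z) := by
    intro x hx
    have h := hCI t x z hz
    rw [key x z t] at h
    have hz' := ne_of_gt hz
    have hx'' := ne_of_gt hx
    field_simp at h
    rw [eq_div_iff hz']
    exact mul_left_cancel₀ (mul_ne_zero hx'' hz') (by rw [h])
  rw [formula x hx, formula x' hx']
end

section
/- Under the randomization assumption, the null hypothesis that Y(x,z) and Y(x',z) are equal in distribution for all x, x', z is equivalent to the conditional independence Y ⊥ X | Z (Theorem 1 of the paper). -/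
open Finset

/-!
Write `G ω = (Y0 a b ω)_{a,b}` for the whole family of potential outcomes. Randomization says that
each atom `{X = x, Z = z}` is independent of every level set of `G`, hence of every event
determined by `G`, in particular of `{Y0 x z = t}`. Since `Y = Y0 x z` on that atom,
`P(Y = t, X = x, Z = z) = P(Y0 x z = t) P(X = x, Z = z)`. Summing over `x` shows that under H₀ the
conditional law of `Y` given `Z = z` is the law of `Y0 x z` for any `x` charged by `Z = z`, which
is the conditional independence; conversely, dividing the conditional independence identity by
`P(X = x | Z = z) > 0` recovers the law of `Y0 x z` as the conditional law of `Y` given `Z = z`,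
which does not depend on `x`.
-/

namespace Pr

variable {Ω : Type*} [Fintype Ω] (p : Ω → ℝ)

theorem congr {S T : Ω → Prop} (h : ∀ ω, S ω ↔ T ω) : Pr p S = Pr p T := by
  simp only [funext fun ω => propext (h ω)]

open Classical in
theorem const_and (c : Prop) (S : Ω → Prop) :
    Pr p (fun ω => c ∧ S ω) = if c then Pr p S else 0 := by
  by_cases hc : c <;> simp [Pr, hc]

open Classical in
theorem eq_sum_image {β : Type*} (G : Ω → β) (S : Ω → Prop) :
    Pr p S = ∑ b ∈ univ.image G, Pr p (fun ω => S ω ∧ G ω = b) := by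
  unfold Pr
  rw [Finset.sum_comm]
  refine Finset.sum_congr rfl fun ω _ => ?_
  by_cases hS : S ω
  · simp [hS, Finset.sum_ite_eq]
  · simp [hS]

theorem and_comp_eq_mul {β : Type*} (A : Ω → Prop) (G : Ω → β)
    (hA : ∀ b, Pr p (fun ω => A ω ∧ G ω = b) = Pr p A * Pr p (fun ω => G ω = b))
    (P : β → Prop) :
    Pr p (fun ω => A ω ∧ P (G ω)) = Pr p A * Pr p (fun ω => P (G ω)) := by
  classical
  have fiber : ∀ (B : Ω → Prop) b, Pr p (fun ω => (B ω ∧ P (G ω)) ∧ G ω = b)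
      = if P b then Pr p (fun ω => B ω ∧ G ω = b) else 0 := fun B b => by
    rw [← const_and]
    exact congr p fun ω => by by_cases hb : G ω = b <;> simp [hb, and_comm]
  rw [eq_sum_image p G, eq_sum_image p G (fun ω => P (G ω)), Finset.mul_sum]
  refine Finset.sum_congr rfl fun b _ => ?_
  have hfiber := fiber (fun _ => True) b
  simp only [true_and] at hfiber
  rw [fiber A b, hfiber, hA b]
  split <;> simp

variable {p}

theorem nonneg (hp : ∀ ω, 0 ≤ p ω) (S : Ω → Prop) : 0 ≤ Pr p S :=
  Finset.sum_nonneg fun ω _ => by split <;> simp [hp ω]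

theorem mono (hp : ∀ ω, 0 ≤ p ω) {S T : Ω → Prop} (h : ∀ ω, S ω → T ω) : Pr p S ≤ Pr p T := by
  refine Finset.sum_le_sum fun ω _ => ?_
  by_cases hS : S ω
  · simp [hS, h ω hS]
  · simp only [hS, if_false]
    split <;> simp [hp ω]

end Pr

section PotentialOutcomes

variable {Ω 𝒳 𝒵 : Type*} [Fintype Ω] {p : Ω → ℝ} {X : Ω → 𝒳} {Z : Ω → 𝒵}
  {Y0 : 𝒳 → 𝒵 → Ω → ℝ} {Y : Ω → ℝ}

theorem Pr_observed_and_atom_eq_mul (hY : ∀ ω, Y ω = Y0 (X ω) (Z ω) ω)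
    (hrand : ∀ (x : 𝒳) (z : 𝒵) (g : 𝒳 → 𝒵 → ℝ),
      Pr p (fun ω => X ω = x ∧ Z ω = z ∧ ∀ a b, Y0 a b ω = g a b)
        = Pr p (fun ω => X ω = x ∧ Z ω = z) * Pr p (fun ω => ∀ a b, Y0 a b ω = g a b))
    (x : 𝒳) (z : 𝒵) (t : ℝ) :
    Pr p (fun ω => Y ω = t ∧ X ω = x ∧ Z ω = z)
      = Pr p (fun ω => Y0 x z ω = t) * Pr p (fun ω => X ω = x ∧ Z ω = z) := by
  have hindep : ∀ g : 𝒳 → 𝒵 → ℝ,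
      Pr p (fun ω => (X ω = x ∧ Z ω = z) ∧ (fun a b => Y0 a b ω) = g)
        = Pr p (fun ω => X ω = x ∧ Z ω = z) * Pr p (fun ω => (fun a b => Y0 a b ω) = g) := by
    intro g
    simp only [funext_iff, and_assoc]
    exact hrand x z g
  calc Pr p (fun ω => Y ω = t ∧ X ω = x ∧ Z ω = z)
      = Pr p (fun ω => (X ω = x ∧ Z ω = z) ∧ Y0 x z ω = t) :=
        Pr.congr p fun ω => by
          constructor
          · rintro ⟨rfl, rfl, rfl⟩
            exact ⟨⟨rfl, rfl⟩, (hY ω).symm⟩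
          · rintro ⟨⟨rfl, rfl⟩, rfl⟩
            exact ⟨hY ω, rfl, rfl⟩
    _ = Pr p (fun ω => X ω = x ∧ Z ω = z) * Pr p (fun ω => Y0 x z ω = t) :=
        Pr.and_comp_eq_mul p _ (fun ω a b => Y0 a b ω) hindep (fun g => g x z = t)
    _ = _ := mul_comm _ _

theorem Pr_observed_and_stratum_eq_mul (hp : ∀ ω, 0 ≤ p ω)
    (hatom : ∀ x z t, Pr p (fun ω => Y ω = t ∧ X ω = x ∧ Z ω = z)
      = Pr p (fun ω => Y0 x z ω = t) * Pr p (fun ω => X ω = x ∧ Z ω = z))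
    (hH0 : ∀ (x x' : 𝒳) (z : 𝒵),
        0 < Pr p (fun ω => X ω = x ∧ Z ω = z) →
        0 < Pr p (fun ω => X ω = x' ∧ Z ω = z) →
        ∀ t : ℝ, Pr p (fun ω => Y0 x z ω = t) = Pr p (fun ω => Y0 x' z ω = t))
    {x : 𝒳} {z : 𝒵} (hx : 0 < Pr p (fun ω => X ω = x ∧ Z ω = z)) (t : ℝ) :
    Pr p (fun ω => Y ω = t ∧ Z ω = z)
      = Pr p (fun ω => Y0 x z ω = t) * Pr p (fun ω => Z ω = z) := by
  classical
  rw [Pr.eq_sum_image p X, Pr.eq_sum_image p X (fun ω => Z ω = z), Finset.mul_sum]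
  refine Finset.sum_congr rfl fun x' _ => ?_
  have hjoint : Pr p (fun ω => (Y ω = t ∧ Z ω = z) ∧ X ω = x')
      = Pr p (fun ω => Y ω = t ∧ X ω = x' ∧ Z ω = z) := Pr.congr p fun ω => by tauto
  have hswap : Pr p (fun ω => Z ω = z ∧ X ω = x') = Pr p (fun ω => X ω = x' ∧ Z ω = z) :=
    Pr.congr p fun ω => and_comm
  rw [hjoint, hswap, hatom]
  rcases (Pr.nonneg hp fun ω => X ω = x' ∧ Z ω = z).eq_or_lt with hx' | hx'
  · rw [← hx', mul_zero, mul_zero]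
  · rw [hH0 x' x z hx' hx t]

end PotentialOutcomes

theorem stmt2_general {Ω 𝒳 𝒵 : Type*} [Fintype Ω]
    (p : Ω → ℝ) (hp : ∀ ω, 0 ≤ p ω)
    (X : Ω → 𝒳) (Z : Ω → 𝒵) (Y0 : 𝒳 → 𝒵 → Ω → ℝ)
    (Y : Ω → ℝ) (hY : ∀ ω, Y ω = Y0 (X ω) (Z ω) ω)
    -- randomization: (X,Z) is independent of the family of potential outcomes
    (hrand : ∀ (x : 𝒳) (z : 𝒵) (g : 𝒳 → 𝒵 → ℝ),
      Pr p (fun ω => X ω = x ∧ Z ω = z ∧ ∀ a b, Y0 a b ω = g a b)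
        = Pr p (fun ω => X ω = x ∧ Z ω = z) * Pr p (fun ω => ∀ a b, Y0 a b ω = g a b)) :
    -- H₀ (equality in distribution of potential outcomes) ↔ Y ⊥ X | Z
    ((∀ (x x' : 𝒳) (z : 𝒵),
        0 < Pr p (fun ω => X ω = x ∧ Z ω = z) →
        0 < Pr p (fun ω => X ω = x' ∧ Z ω = z) →
        ∀ t : ℝ, Pr p (fun ω => Y0 x z ω = t) = Pr p (fun ω => Y0 x' z ω = t))
      ↔ (∀ (t : ℝ) (x : 𝒳) (z : 𝒵), 0 < Pr p (fun ω => Z ω = z) →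
          Pr p (fun ω => Y ω = t ∧ X ω = x ∧ Z ω = z) / Pr p (fun ω => Z ω = z)
            = (Pr p (fun ω => Y ω = t ∧ Z ω = z) / Pr p (fun ω => Z ω = z))
              * (Pr p (fun ω => X ω = x ∧ Z ω = z) / Pr p (fun ω => Z ω = z)))) := by
  have hatom := Pr_observed_and_atom_eq_mul hY hrand
  constructor
  · intro hH0 t x z hz
    rw [hatom]
    rcases (Pr.nonneg hp fun ω => X ω = x ∧ Z ω = z).eq_or_lt with hx | hx
    · simp [← hx]
    · rw [Pr_observed_and_stratum_eq_mul hp hatom hH0 hx]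
      field_simp
  · intro hCI x x' z hx hx' t
    have hz : 0 < Pr p (fun ω => Z ω = z) := hx.trans_le (Pr.mono hp fun ω h => h.2)
    have hlaw : ∀ x₀, 0 < Pr p (fun ω => X ω = x₀ ∧ Z ω = z) →
        Pr p (fun ω => Y0 x₀ z ω = t)
          = Pr p (fun ω => Y ω = t ∧ Z ω = z) / Pr p (fun ω => Z ω = z) := by
      intro x₀ hx₀
      have h := hCI t x₀ z hz
      rw [hatom, mul_div_assoc] at h
      exact mul_right_cancel₀ (div_pos hx₀ hz).ne' h
    rw [hlaw x hx, hlaw x' hx']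

theorem stmt2 {Ω 𝒳 𝒵 : Type*} [Fintype Ω] [Fintype 𝒳] [Fintype 𝒵]
    (p : Ω → ℝ) (hp : ∀ ω, 0 ≤ p ω) (hp1 : ∑ ω, p ω = 1)
    (X : Ω → 𝒳) (Z : Ω → 𝒵) (Y0 : 𝒳 → 𝒵 → Ω → ℝ)
    (Y : Ω → ℝ) (hY : ∀ ω, Y ω = Y0 (X ω) (Z ω) ω)
    -- randomization: (X,Z) is independent of the family of potential outcomes
    (hrand : ∀ (x : 𝒳) (z : 𝒵) (g : 𝒳 → 𝒵 → ℝ),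
      Pr p (fun ω => X ω = x ∧ Z ω = z ∧ ∀ a b, Y0 a b ω = g a b)
        = Pr p (fun ω => X ω = x ∧ Z ω = z) * Pr p (fun ω => ∀ a b, Y0 a b ω = g a b)) :
    -- H₀ (equality in distribution of potential outcomes) ↔ Y ⊥ X | Z
    ((∀ (x x' : 𝒳) (z : 𝒵),
        0 < Pr p (fun ω => X ω = x ∧ Z ω = z) →
        0 < Pr p (fun ω => X ω = x' ∧ Z ω = z) →
        ∀ t : ℝ, Pr p (fun ω => Y0 x z ω = t) = Pr p (fun ω => Y0 x' z ω = t))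
      ↔ (∀ (t : ℝ) (x : 𝒳) (z : 𝒵), 0 < Pr p (fun ω => Z ω = z) →
          Pr p (fun ω => Y ω = t ∧ X ω = x ∧ Z ω = z) / Pr p (fun ω => Z ω = z)
            = (Pr p (fun ω => Y ω = t ∧ Z ω = z) / Pr p (fun ω => Z ω = z))
              * (Pr p (fun ω => X ω = x ∧ Z ω = z) / Pr p (fun ω => Z ω = z)))) :=
  stmt2_general p hp X Z Y0 Y hY hrand
end
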